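/- Let q, u be indeterminates and set [x]_{q,u} = (q^x u − q^{-x})/(q − q^{-1}), [m]_q = (q^m − q^{-m})/(q − q^{-1}), with Gaussian q-binomials binom_q. On the ℚ(q,u)-vector space with basis (z_i ⊗ z_j)_{i,j≥0}, define R(u)(z_i⊗z_j) = Σ_{ν=0}^{i} u^{-i} (q − q^{-1})^{i−ν} q^{(i−ν)(i−2j+3ν−1)/2} binom_q(i+j−ν, j) (Π_{s=ν−i+1}^{0} [s]_{q,u}) · z_{ν} ⊗ z_{i+j−ν}. Define the operators E = e⊗1 + k⊗e and K = k⊗k, where e z_j = z_{j−1} (z_{−1} = 0) and k z_j = q^{-2j} z_j. Then R(u) ∘ E = E ∘ R(u) and R(u) ∘ K = K ∘ R(u). -/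

import Mathlib

/-- The field `ℚ(q, u)`, realized as `ℚ(q)(u)`. -/
abbrev Stmt15K : Type := RatFunc (RatFunc ℚ)

/-- The indeterminate `q` in `ℚ(q,u)`. -/
noncomputable def stmt15q : Stmt15K := RatFunc.C RatFunc.X

/-- The indeterminate `u` in `ℚ(q,u)`. -/
noncomputable def stmt15u : Stmt15K := RatFunc.X

/-- `[x]_{q,u} = (q^x u - q^{-x})/(q - q^{-1})` for `x ∈ ℤ`. -/
noncomputable def stmt15bqu (x : ℤ) : Stmt15K :=
  (stmt15q ^ x * stmt15u - stmt15q ^ (-x)) / (stmt15q - stmt15q⁻¹)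

/-- The quantum integer `[m]_q`. -/
noncomputable def stmt15qnum (m : ℕ) : Stmt15K :=
  (stmt15q ^ m - stmt15q⁻¹ ^ m) / (stmt15q - stmt15q⁻¹)

/-- The quantum factorial `[m]_q!`. -/
noncomputable def stmt15qfact : ℕ → Stmt15K
  | 0 => 1
  | n + 1 => stmt15qfact n * stmt15qnum (n + 1)

/-- The Gaussian `q`-binomial coefficient. -/
noncomputable def stmt15qbinom (m p : ℕ) : Stmt15K :=
  stmt15qfact m / (stmt15qfact p * stmt15qfact (m - p))

/-- Basis vector `z_i ⊗ z_j`. -/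
noncomputable def stmt15zb (p : ℕ × ℕ) : (ℕ × ℕ) →₀ Stmt15K := Finsupp.single p 1

/-!
Write `i = ν + n`. The coefficient of `z_ν ⊗ z_{i+j-ν}` in `R(z_i ⊗ z_j)` is
`u^{-i} q^{C(n,2) + 2nν - nj} [n+j choose j]_q ∏_{s<n} (q^{-s} u - q^s)`.
Comparing the coefficients of `z_ν ⊗ z_{i+j-1-ν}` in `R E (z_i ⊗ z_j)` and `E R (z_i ⊗ z_j)` for
`i = ν + n + 1`, the extra factor `q^{-n} u - q^n` of the longer product makes the difference of
the two sides `(u - q^{2n})` times an instance of the `q`-Pascal rule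
`[n+1+j choose j] = q^j [n+j choose j] + q^{-n-1} [n+j choose j-1]`, so it vanishes.
`K` commutes with `R` because `R` preserves the total degree `i + j`.
-/

namespace Stmt15

open Finset

local notation "q" => stmt15q
local notation "u" => stmt15u

lemma q_ne_zero : q ≠ 0 := (map_ne_zero _).2 RatFunc.X_ne_zero

lemma u_ne_zero : u ≠ 0 := RatFunc.X_ne_zero

lemma q_pow_ne_one {k : ℕ} (hk : k ≠ 0) : q ^ k ≠ 1 := by
  have hX : (RatFunc.X : RatFunc ℚ) ^ k ≠ 1 := by
    rw [← RatFunc.algebraMap_X, ← map_pow, ← map_one (algebraMap (Polynomial ℚ) _)]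
    intro h
    simpa [hk] using congrArg Polynomial.natDegree (RatFunc.algebraMap_injective ℚ h)
  rw [stmt15q, ← map_pow, ← map_one RatFunc.C]
  exact fun h => hX (RatFunc.C_injective h)

lemma q_pow_sub_inv_pow_ne_zero {m : ℕ} (hm : m ≠ 0) : q ^ m - q⁻¹ ^ m ≠ 0 := by
  intro h
  refine q_pow_ne_one (k := m + m) (by omega) ?_
  calc q ^ (m + m) = q ^ m * q⁻¹ ^ m := by rw [pow_add, sub_eq_zero.1 h]
    _ = 1 := by rw [← mul_pow, mul_inv_cancel₀ q_ne_zero, one_pow]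

lemma q_sub_inv_ne_zero : q - q⁻¹ ≠ 0 := by
  simpa using q_pow_sub_inv_pow_ne_zero one_ne_zero

lemma qnum_add (a b : ℕ) :
    stmt15qnum (a + b) = q ^ b * stmt15qnum a + (q ^ a)⁻¹ * stmt15qnum b := by
  simp only [stmt15qnum, inv_pow]
  ring

lemma qnum_ne_zero {m : ℕ} (hm : m ≠ 0) : stmt15qnum m ≠ 0 :=
  div_ne_zero (q_pow_sub_inv_pow_ne_zero hm) q_sub_inv_ne_zero

lemma qfact_succ (m : ℕ) : stmt15qfact (m + 1) = stmt15qfact m * stmt15qnum (m + 1) := rfl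

lemma qfact_ne_zero (m : ℕ) : stmt15qfact m ≠ 0 := by
  induction m with
  | zero => exact one_ne_zero
  | succ m ih => exact mul_ne_zero ih (qnum_ne_zero m.succ_ne_zero)

lemma qbinom_add_left (n k : ℕ) :
    stmt15qbinom (n + k) k = stmt15qfact (n + k) / (stmt15qfact n * stmt15qfact k) := by
  rw [stmt15qbinom, Nat.add_sub_cancel, mul_comm]

lemma qbinom_zero_right (m : ℕ) : stmt15qbinom m 0 = 1 := by
  rw [stmt15qbinom, stmt15qfact, one_mul, Nat.sub_zero, div_self (qfact_ne_zero m)]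

lemma qbinom_self (m : ℕ) : stmt15qbinom m m = 1 := by
  rw [stmt15qbinom, Nat.sub_self, stmt15qfact, mul_one, div_self (qfact_ne_zero m)]

lemma qbinom_pascal (n k : ℕ) :
    stmt15qbinom (n + 1 + (k + 1)) (k + 1) =
      q ^ (k + 1) * stmt15qbinom (n + (k + 1)) (k + 1) +
        (q ^ (n + 1))⁻¹ * stmt15qbinom (n + 1 + k) k := by
  rw [qbinom_add_left, qbinom_add_left, qbinom_add_left,
    show n + 1 + (k + 1) = n + k + 1 + 1 by omega, show n + (k + 1) = n + k + 1 by omega,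
    show n + 1 + k = n + k + 1 by omega]
  rw [qfact_succ (n + k + 1), qfact_succ n, qfact_succ k,
    show n + k + 1 + 1 = (n + 1) + (k + 1) by omega, qnum_add]
  have := qfact_ne_zero n
  have := qfact_ne_zero k
  have := qfact_ne_zero (n + k + 1)
  have := qnum_ne_zero n.succ_ne_zero
  have := qnum_ne_zero k.succ_ne_zero
  field_simp

noncomputable def rCoeff (i j ν : ℕ) : Stmt15K :=
  (u ^ i)⁻¹ * (q - q⁻¹) ^ (i - ν) * q ^ (((i : ℤ) - ν) * ((i : ℤ) - 2 * j + 3 * ν - 1) / 2) *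
    stmt15qbinom (i + j - ν) j * ∏ t ∈ range (i - ν), stmt15bqu ((ν : ℤ) - i + 1 + t)

/-- `(q - q⁻¹)ⁿ ∏_{s = 1-n}^{0} [s]_{q,u}`, the product in `R(u)` with its denominators cleared. -/
noncomputable def uProd (n : ℕ) : Stmt15K := ∏ s ∈ range n, ((q ^ s)⁻¹ * u - q ^ s)

lemma uProd_succ (n : ℕ) : uProd (n + 1) = uProd n * ((q ^ n)⁻¹ * u - q ^ n) :=
  prod_range_succ _ _

lemma rCoeff_exponent (n j ν : ℕ) :
    ((ν + n : ℕ) - (ν : ℤ)) * ((ν + n : ℕ) - 2 * (j : ℤ) + 3 * (ν : ℤ) - 1) / 2 =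
      (n.choose 2 + 2 * n * ν : ℕ) - (n * j : ℕ) := by
  refine Int.ediv_eq_of_eq_mul_left two_ne_zero ?_
  have h : ((n.choose 2 * 2 : ℕ) : ℤ) = (n * (n - 1) : ℕ) := by
    rw [Nat.choose_two_right, Nat.div_two_mul_two_of_even n.even_mul_pred_self]
  rcases n with _ | m
  · simp
  · push_cast at h ⊢
    linear_combination -h

lemma q_sub_inv_mul_bqu_neg (s : ℕ) :
    (q - q⁻¹) * stmt15bqu (-(s : ℤ)) = (q ^ s)⁻¹ * u - q ^ s := by
  rw [stmt15bqu, mul_div_cancel₀ _ q_sub_inv_ne_zero, neg_neg, zpow_neg, zpow_natCast]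

lemma rCoeff_add_left (n j ν : ℕ) :
    rCoeff (ν + n) j ν = (u ^ (ν + n))⁻¹ * q ^ n.choose 2 * q ^ (2 * n * ν) * (q ^ (n * j))⁻¹ *
      stmt15qbinom (n + j) j * uProd n := by
  have hprod : (q - q⁻¹) ^ n *
      ∏ t ∈ range n, stmt15bqu ((ν : ℤ) - (ν + n : ℕ) + 1 + t) = uProd n := by
    rw [uProd, ← prod_range_reflect, pow_eq_prod_const, ← prod_mul_distrib]
    refine prod_congr rfl fun t ht => ?_
    rw [← q_sub_inv_mul_bqu_neg]
    congr 2
    have := mem_range.1 ht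
    push_cast
    omega
  rw [rCoeff, Nat.add_sub_cancel_left, show ν + n + j - ν = n + j by omega, rCoeff_exponent,
    zpow_sub₀ q_ne_zero, zpow_natCast, zpow_natCast, pow_add, ← hprod]
  ring

lemma rCoeff_self (j ν : ℕ) : rCoeff ν j ν = (u ^ ν)⁻¹ := by
  simpa [qbinom_self, uProd] using rCoeff_add_left 0 j ν

lemma rCoeff_intertwine_succ (a j ν : ℕ) :
    rCoeff (ν + 1 + a) j (ν + 1) + (q ^ (2 * ν))⁻¹ * rCoeff (ν + (a + 1)) j ν =
      rCoeff (ν + a) j ν +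
        if j = 0 then 0 else (q ^ (2 * (ν + (a + 1))))⁻¹ * rCoeff (ν + (a + 1)) (j - 1) ν := by
  have hchoose : (a + 1).choose 2 = a.choose 2 + a := by
    rw [Nat.choose_succ_succ', Nat.choose_one_right, add_comm]
  have hq := q_ne_zero
  have hu := u_ne_zero
  cases j with
  | zero =>
    simp only [↓reduceIte, add_zero, rCoeff_add_left, qbinom_zero_right, uProd_succ, hchoose]
    field_simp
    ring
  | succ b =>
    simp only [add_eq_zero, one_ne_zero, and_false, ↓reduceIte, Nat.add_sub_cancel, rCoeff_add_left,
      qbinom_pascal, uProd_succ, hchoose]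
    field_simp
    ring

lemma rCoeff_intertwine {i ν : ℕ} (j : ℕ) (hν : ν ≤ i) :
    (if ν < i then rCoeff i j (ν + 1) else 0) +
        (q ^ (2 * ν))⁻¹ * (if i + j - ν = 0 then 0 else rCoeff i j ν) =
      (if ν < i then rCoeff (i - 1) j ν else 0) +
        if j = 0 then 0 else (q ^ (2 * i))⁻¹ * rCoeff i (j - 1) ν := by
  obtain ⟨n, rfl⟩ := Nat.exists_eq_add_of_le hν
  cases n with
  | zero => split_ifs <;> simp_all [rCoeff_self]
  | succ a =>
    have h := rCoeff_intertwine_succ a j ν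
    rw [show ν + 1 + a = ν + (a + 1) by omega] at h
    rwa [if_pos (by omega), if_neg (by omega), if_pos (by omega), Nat.add_succ_sub_one]

abbrev TensorSpace : Type := (ℕ × ℕ) →₀ Stmt15K

lemma ext_zb {f g : Module.End Stmt15K TensorSpace}
    (h : ∀ i j, f (stmt15zb (i, j)) = g (stmt15zb (i, j))) : f = g :=
  Finsupp.basisSingleOne.ext fun p => h p.1 p.2

noncomputable def opE : Module.End Stmt15K TensorSpace :=
  Finsupp.linearCombination Stmt15K fun p =>
    (if p.1 = 0 then 0 else stmt15zb (p.1 - 1, p.2)) +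
      (q ^ (2 * p.1))⁻¹ • (if p.2 = 0 then 0 else stmt15zb (p.1, p.2 - 1))

noncomputable def opK : Module.End Stmt15K TensorSpace :=
  Finsupp.linearCombination Stmt15K fun p => (q ^ (2 * (p.1 + p.2)))⁻¹ • stmt15zb p

noncomputable def opR : Module.End Stmt15K TensorSpace :=
  Finsupp.linearCombination Stmt15K fun p =>
    ∑ ν ∈ range (p.1 + 1), rCoeff p.1 p.2 ν • stmt15zb (ν, p.1 + p.2 - ν)

lemma linearCombination_zb (f : ℕ × ℕ → TensorSpace) (p : ℕ × ℕ) :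
    Finsupp.linearCombination Stmt15K f (stmt15zb p) = f p := by
  rw [stmt15zb, Finsupp.linearCombination_single, one_smul]

lemma opE_zb (i j : ℕ) : opE (stmt15zb (i, j)) =
    (if i = 0 then 0 else stmt15zb (i - 1, j)) +
      (q ^ (2 * i))⁻¹ • (if j = 0 then 0 else stmt15zb (i, j - 1)) :=
  linearCombination_zb _ _

lemma opK_zb (i j : ℕ) : opK (stmt15zb (i, j)) = (q ^ (2 * (i + j)))⁻¹ • stmt15zb (i, j) :=
  linearCombination_zb _ _

lemma opR_zb (i j : ℕ) :
    opR (stmt15zb (i, j)) = ∑ ν ∈ range (i + 1), rCoeff i j ν • stmt15zb (ν, i + j - ν) :=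
  linearCombination_zb _ _

lemma opE_opR_zb (i j : ℕ) : opE (opR (stmt15zb (i, j))) =
    ∑ ν ∈ range (i + 1), ((if ν < i then rCoeff i j (ν + 1) else 0) +
      (q ^ (2 * ν))⁻¹ * (if i + j - ν = 0 then 0 else rCoeff i j ν)) •
        stmt15zb (ν, i + j - 1 - ν) := by
  simp only [opR_zb, map_sum, map_smul, opE_zb, smul_add, sum_add_distrib, add_smul]
  congr 1
  · rw [sum_range_succ', sum_range_succ]
    simp only [↓reduceIte, smul_zero, add_zero, lt_irrefl, zero_smul, Nat.add_one_ne_zero,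
      Nat.add_sub_cancel]
    refine sum_congr rfl fun ν hν => ?_
    rw [if_pos (mem_range.1 hν), Nat.sub_add_eq, Nat.sub_right_comm]
  · refine sum_congr rfl fun ν _ => ?_
    split_ifs
    · simp
    · rw [smul_smul, mul_comm, Nat.sub_right_comm]

lemma opR_opE_zb (i j : ℕ) : opR (opE (stmt15zb (i, j))) =
    ∑ ν ∈ range (i + 1), ((if ν < i then rCoeff (i - 1) j ν else 0) +
      if j = 0 then 0 else (q ^ (2 * i))⁻¹ * rCoeff i (j - 1) ν) • stmt15zb (ν, i + j - 1 - ν) := by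
  simp only [opE_zb, map_add, map_smul, apply_ite opR, map_zero, opR_zb, sum_add_distrib, add_smul]
  congr 1
  · rcases i with _ | i
    · simp
    · rw [sum_range_succ _ (i + 1)]
      simp only [↓reduceIte, Nat.add_one_ne_zero, lt_irrefl, zero_smul, add_zero,
        Nat.add_sub_cancel]
      refine sum_congr rfl fun ν hν => ?_
      rw [if_pos (mem_range.1 hν), Nat.add_right_comm, Nat.add_sub_cancel]
  · rcases j with _ | j
    · simp
    · simp only [Nat.add_one_ne_zero, ↓reduceIte, smul_sum, smul_smul, Nat.add_sub_cancel]
      rfl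

lemma opR_mul_opE : opR * opE = opE * opR :=
  ext_zb fun i j => by
    rw [Module.End.mul_apply, Module.End.mul_apply, opE_opR_zb, opR_opE_zb]
    exact sum_congr rfl fun ν hν => by
      rw [rCoeff_intertwine j (Nat.lt_succ_iff.1 (mem_range.1 hν))]

lemma opR_mul_opK : opR * opK = opK * opR :=
  ext_zb fun i j => by
    rw [Module.End.mul_apply, Module.End.mul_apply, opK_zb, map_smul, opR_zb, map_sum, smul_sum]
    refine sum_congr rfl fun ν hν => ?_
    rw [map_smul, opK_zb, smul_comm, Nat.add_sub_of_le (by have := mem_range.1 hν; omega)]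

end Stmt15

/-- the explicit affine `R`-matrix `R(u)` for
`L⁻_{1,a} ⊗ L⁻_{1,a}` over `U_q(ŝl₂)` commutes with the coproduct actions
`E = e ⊗ 1 + k ⊗ e` and `K = k ⊗ k` of the Chevalley generators `e₁, k₁`
(where `e z_j = z_{j-1}`, `k z_j = q^{-2j} z_j`). -/
theorem stmt15 (R E K : Module.End Stmt15K ((ℕ × ℕ) →₀ Stmt15K))
    (hE : ∀ i j : ℕ, E (stmt15zb (i, j)) =
      (if i = 0 then 0 else stmt15zb (i - 1, j)) +
        (stmt15q ^ (2 * i))⁻¹ • (if j = 0 then 0 else stmt15zb (i, j - 1)))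
    (hK : ∀ i j : ℕ, K (stmt15zb (i, j)) = (stmt15q ^ (2 * (i + j)))⁻¹ • stmt15zb (i, j))
    (hR : ∀ i j : ℕ, R (stmt15zb (i, j)) =
      ∑ ν ∈ Finset.range (i + 1),
        ((stmt15u ^ i)⁻¹ * (stmt15q - stmt15q⁻¹) ^ (i - ν) *
            stmt15q ^ (((i : ℤ) - (ν : ℤ)) * ((i : ℤ) - 2 * (j : ℤ) + 3 * (ν : ℤ) - 1) / 2) *
            stmt15qbinom (i + j - ν) j *
            ∏ t ∈ Finset.range (i - ν), stmt15bqu ((ν : ℤ) - (i : ℤ) + 1 + (t : ℤ))) •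
          stmt15zb (ν, i + j - ν)) :
    R * E = E * R ∧ R * K = K * R := by
  have hE' : E = Stmt15.opE := Stmt15.ext_zb fun i j => by rw [hE, Stmt15.opE_zb]
  have hK' : K = Stmt15.opK := Stmt15.ext_zb fun i j => by rw [hK, Stmt15.opK_zb]
  have hR' : R = Stmt15.opR := Stmt15.ext_zb fun i j => by rw [hR, Stmt15.opR_zb]; rfl
  subst hE' hK' hR'
  exact ⟨Stmt15.opR_mul_opE, Stmt15.opR_mul_opK⟩
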